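/- Let m̲ ≥ 2 be an integer with N ≥ m̲ almost surely, and let a̲ > 0 be a constant such that (A_k)_{ij} ≥ a̲ almost surely for all i, j ∈ {1,…,p} and all 1 ≤ k ≤ m̲. Assume a̲ p m̲ < 1 and a̲ p < 1, so that γ := −log m̲ / log(a̲ p) ∈ (0,1) (in the paper this strict inequality is deduced from Assumption (H) together with P(N = m̲) > 0). Then there exists a constant C₁ > 0 such that φ(t) ≤ exp(−C₁ ‖t‖^γ) for all t ∈ [0,∞)^p with ‖t‖ sufficiently large, and for every fixed nonzero y ∈ [0,∞)^p there exists a constant C_{1,y} > 0 such that P(y·Z ≤ x) ≤ exp(−C_{1,y} x^{−γ/(1−γ)}) for all x > 0 sufficiently small. -/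

import Mathlib

/-!
Write `f s = φ (s, …, s)`. Since `N ≥ m` and the first `m` matrices have entries `≥ a`, each
factor `φ (t A_k)` of the functional equation is at most `f (a ‖t‖)` for `k ≤ m` and at most `1`
otherwise, so `φ t ≤ f (a ‖t‖) ^ m`; on the diagonal this reads `f (b s) ≤ f s ^ m` with
`b = (a p)⁻¹`. Iterating from `f 1 < 1` gives `f (b ^ n) ≤ f 1 ^ m ^ n`, and
`m ^ n = (b ^ n) ^ γ`, which is the stretched-exponential decay of `φ`. The small-ball bound is
the Chernoff bound `P(y·Z ≤ x) ≤ exp (s x) φ (s y)` at `s ≍ x ^ (-1 / (1 - γ))`, where `γ < 1`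
is the condition `a p m < 1`.
-/

open MeasureTheory ProbabilityTheory Filter Real Matrix

lemma le_exp_neg_mul_rpow_of_le_pow {f : ℝ → ℝ} {b γ c : ℝ} {m : ℕ} (hb : 1 < b)
    (hγ : 0 ≤ γ) (hbγ : b ^ γ = m) (hc : 0 ≤ c) (hf0 : ∀ s, 1 ≤ s → 0 ≤ f s)
    (hf : AntitoneOn f (Set.Ici 1)) (hstep : ∀ s, 1 ≤ s → f (b * s) ≤ f s ^ m)
    (hf1 : f 1 ≤ exp (-c)) {s : ℝ} (hs : 1 ≤ s) : f s ≤ exp (-(c / m * s ^ γ)) := by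
  have hbn : ∀ n : ℕ, 1 ≤ b ^ n := fun n => one_le_pow₀ hb.le
  have hiter : ∀ n : ℕ, f (b ^ n) ≤ exp (-c) ^ m ^ n := by
    intro n
    induction n with
    | zero => simpa using hf1
    | succ n ih =>
      calc f (b ^ (n + 1)) = f (b * b ^ n) := by rw [pow_succ']
        _ ≤ f (b ^ n) ^ m := hstep _ (hbn n)
        _ ≤ (exp (-c) ^ m ^ n) ^ m := pow_le_pow_left₀ (hf0 _ (hbn n)) ih m
        _ = exp (-c) ^ m ^ (n + 1) := by rw [← pow_mul, pow_succ]
  obtain ⟨n, hbs, hsb⟩ := exists_nat_pow_near hs hb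
  have hm : (0 : ℝ) < m := hbγ ▸ rpow_pos_of_pos (by linarith) γ
  have hsγ : s ^ γ ≤ m * m ^ n :=
    calc s ^ γ ≤ (b ^ (n + 1)) ^ γ := rpow_le_rpow (by linarith) hsb.le hγ
      _ = m * m ^ n := by rw [← rpow_pow_comm (by linarith), hbγ, pow_succ']
  calc f s ≤ f (b ^ n) := hf (hbn n) hs hbs
    _ ≤ exp (-c) ^ m ^ n := hiter n
    _ = exp (-(c * m ^ n)) := by rw [← exp_nat_mul]; push_cast; ring_nf
    _ ≤ exp (-(c / m * s ^ γ)) := by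
      refine exp_le_exp.2 (neg_le_neg ?_)
      rw [div_mul_eq_mul_div, div_le_iff₀ hm]
      nlinarith [mul_le_mul_of_nonneg_left hsγ hc]

lemma exists_exp_mul_le_exp_neg_rpow {g : ℝ → ℝ} {γ C T : ℝ} (hγ : γ < 1) (hC : 0 < C)
    (hT : 0 < T) (hg : ∀ s, T ≤ s → g s ≤ exp (-(C * s ^ γ))) :
    ∃ κ > 0, ∃ x₀ > 0, ∀ x : ℝ, 0 < x → x ≤ x₀ →
      ∃ s ≥ T, exp (s * x) * g s ≤ exp (-(κ * x ^ (-(γ / (1 - γ))))) := by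
  have h1γ : 0 < 1 - γ := by linarith
  set κ := (C / 2) ^ (1 / (1 - γ))
  have hκ : 0 < κ := by positivity
  -- at `s = κ x ^ (-1 / (1 - γ))` this makes `C s ^ γ = 2 s x`, so the exponent is `-s x`
  have hκC : C * κ ^ γ = 2 * κ := by
    have hκ1γ : κ ^ (1 - γ) = C / 2 := by
      rw [← rpow_mul (by positivity), one_div_mul_cancel h1γ.ne', rpow_one]
    calc C * κ ^ γ = 2 * (κ ^ (1 - γ) * κ ^ γ) := by rw [hκ1γ]; ring
      _ = 2 * κ := by rw [← rpow_add hκ, sub_add_cancel, rpow_one]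
  refine ⟨κ, hκ, (κ / T) ^ (1 - γ), by positivity, fun x hx hxx => ?_⟩
  set s := κ * x ^ (-(1 / (1 - γ))) with hs
  have hsT : T ≤ s := by
    have hx' : x ^ (1 / (1 - γ)) ≤ κ / T :=
      calc x ^ (1 / (1 - γ)) ≤ ((κ / T) ^ (1 - γ)) ^ (1 / (1 - γ)) :=
            rpow_le_rpow hx.le hxx (one_div_pos.2 h1γ).le
        _ = κ / T := by
            rw [← rpow_mul (div_pos hκ hT).le, mul_one_div_cancel h1γ.ne', rpow_one]
    rw [hs, rpow_neg hx.le, ← div_eq_mul_inv, le_div_iff₀ (by positivity)]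
    rwa [le_div_iff₀ hT, mul_comm] at hx'
  have hsx : s * x = κ * x ^ (-(γ / (1 - γ))) := by
    rw [hs, mul_assoc, ← rpow_add_one hx.ne']
    congr 2
    field_simp
    ring
  have hsγ : s ^ γ = κ ^ γ * x ^ (-(γ / (1 - γ))) := by
    rw [hs, mul_rpow hκ.le (by positivity), ← rpow_mul hx.le]
    congr 2
    ring
  refine ⟨s, hsT, ?_⟩
  calc exp (s * x) * g s ≤ exp (s * x) * exp (-(C * s ^ γ)) :=
        mul_le_mul_of_nonneg_left (hg s hsT) (exp_pos _).le
    _ = exp (-(κ * x ^ (-(γ / (1 - γ))))) := by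
        rw [← exp_add, hsx, hsγ, ← mul_assoc, hκC]
        ring_nf

lemma prod_Icc_le_pow_of_antitoneOn {E : Type*} [Preorder E] {φ : E → ℝ} {S : Set E}
    (hφ0 : ∀ x ∈ S, 0 ≤ φ x) (hφ1 : ∀ x ∈ S, φ x ≤ 1) (hφ : AntitoneOn φ S) {u : ℕ → E}
    (hu : ∀ k, u k ∈ S) {v : E} (hv : v ∈ S) {m n : ℕ} (hmn : m ≤ n)
    (huv : ∀ k, 1 ≤ k → k ≤ m → v ≤ u k) : ∏ k ∈ Finset.Icc 1 n, φ (u k) ≤ φ v ^ m :=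
  calc ∏ k ∈ Finset.Icc 1 n, φ (u k) ≤ ∏ k ∈ Finset.Icc 1 m, φ (u k) :=
        Finset.prod_le_prod_of_subset_of_le_one (Finset.Icc_subset_Icc_right hmn)
          (fun k _ => hφ0 _ (hu k)) fun k _ _ => hφ1 _ (hu k)
    _ ≤ ∏ _k ∈ Finset.Icc 1 m, φ v := Finset.prod_le_prod (fun k _ => hφ0 _ (hu k))
        fun k hk => hφ hv (hu k) (huv k (Finset.mem_Icc.1 hk).1 (Finset.mem_Icc.1 hk).2)
    _ = φ v ^ m := by simp

noncomputable def laplaceTransform {Ω ι : Type*} [MeasurableSpace Ω] [Fintype ι]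
    (μ : Measure Ω) (Z : Ω → ι → ℝ) (t : ι → ℝ) : ℝ :=
  ∫ ω, exp (-(t ⬝ᵥ Z ω)) ∂μ

section LaplaceTransform

variable {Ω ι : Type*} [MeasurableSpace Ω] [Fintype ι] {μ : Measure Ω} {Z : Ω → ι → ℝ}

lemma laplaceTransform_nonneg (t : ι → ℝ) : 0 ≤ laplaceTransform μ Z t :=
  integral_nonneg fun _ => (exp_pos _).le

lemma exp_neg_dotProduct_le_one {t w : ι → ℝ} (ht : 0 ≤ t) (hw : 0 ≤ w) :
    exp (-(t ⬝ᵥ w)) ≤ 1 :=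
  exp_le_one_iff.2 (neg_nonpos.2 (dotProduct_nonneg_of_nonneg ht hw))

lemma integrable_exp_neg_dotProduct [IsFiniteMeasure μ] (hZm : Measurable Z)
    (hZ : ∀ᵐ ω ∂μ, 0 ≤ Z ω) {t : ι → ℝ} (ht : 0 ≤ t) :
    Integrable (fun ω => exp (-(t ⬝ᵥ Z ω))) μ := by
  refine (integrable_const 1).mono' (by fun_prop) ?_
  filter_upwards [hZ] with ω hω
  rw [norm_of_nonneg (exp_pos _).le]
  exact exp_neg_dotProduct_le_one ht hω

variable [IsProbabilityMeasure μ]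

lemma laplaceTransform_le_one (hZ : ∀ᵐ ω ∂μ, 0 ≤ Z ω) {t : ι → ℝ} (ht : 0 ≤ t) :
    laplaceTransform μ Z t ≤ 1 := by
  refine (integral_mono_of_nonneg (ae_of_all _ fun _ => (exp_pos _).le) (integrable_const 1)
    ?_).trans_eq (by simp)
  filter_upwards [hZ] with ω hω
  exact exp_neg_dotProduct_le_one ht hω

lemma laplaceTransform_pos (hZm : Measurable Z) (hZ : ∀ᵐ ω ∂μ, 0 ≤ Z ω) {t : ι → ℝ}
    (ht : 0 ≤ t) : 0 < laplaceTransform μ Z t :=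
  integral_exp_pos (integrable_exp_neg_dotProduct hZm hZ ht)

lemma laplaceTransform_antitoneOn (hZm : Measurable Z) (hZ : ∀ᵐ ω ∂μ, 0 ≤ Z ω) :
    AntitoneOn (laplaceTransform μ Z) (Set.Ici 0) := by
  intro t ht t' _ htt'
  refine integral_mono_of_nonneg (ae_of_all _ fun _ => (exp_pos _).le)
    (integrable_exp_neg_dotProduct hZm hZ ht) ?_
  filter_upwards [hZ] with ω hω
  exact exp_le_exp.2 (neg_le_neg (dotProduct_le_dotProduct_of_nonneg_right htt' hω))

lemma laplaceTransform_lt_one (hZm : Measurable Z) (hZpos : ∀ᵐ ω ∂μ, ∀ j, 0 < Z ω j)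
    {t : ι → ℝ} (ht : 0 ≤ t) (ht0 : t ≠ 0) : laplaceTransform μ Z t < 1 := by
  have hZ : ∀ᵐ ω ∂μ, 0 ≤ Z ω := hZpos.mono fun ω hω j => (hω j).le
  obtain ⟨j, hj⟩ := Function.ne_iff.1 ht0
  have hgap : ∀ᵐ ω ∂μ, 0 < 1 - exp (-(t ⬝ᵥ Z ω)) := by
    filter_upwards [hZpos] with ω hω
    have hdot : 0 < t ⬝ᵥ Z ω := Finset.sum_pos' (fun i _ => mul_nonneg (ht i) (hω i).le)
      ⟨j, Finset.mem_univ j, mul_pos ((ht j).lt_of_ne' hj) (hω j)⟩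
    simpa using hdot
  have hexp := integrable_exp_neg_dotProduct hZm hZ ht
  have hint := (integrable_const 1).sub hexp
  have hpos : 0 < ∫ ω, (1 - exp (-(t ⬝ᵥ Z ω))) ∂μ := by
    refine (integral_nonneg_of_ae (hgap.mono fun _ h => h.le)).lt_of_ne' fun h0 => ?_
    obtain ⟨ω, hω0, hωpos⟩ :=
      (((integral_eq_zero_iff_of_nonneg_ae (hgap.mono fun _ h => h.le) hint).1 h0).and
        hgap).exists
    exact hωpos.ne' hω0
  rw [integral_sub (integrable_const 1) hexp] at hpos
  simpa [laplaceTransform] using hpos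

lemma measureReal_dotProduct_le_le (hZm : Measurable Z) (hZ : ∀ᵐ ω ∂μ, 0 ≤ Z ω)
    {y : ι → ℝ} (hy : 0 ≤ y) {s : ℝ} (hs : 0 ≤ s) (x : ℝ) :
    μ.real {ω | y ⬝ᵥ Z ω ≤ x} ≤ exp (s * x) * laplaceTransform μ Z (s • y) := by
  have hmgf : mgf (fun ω => y ⬝ᵥ Z ω) μ (-s) = laplaceTransform μ Z (s • y) := by
    simp [mgf, laplaceTransform, smul_dotProduct]
  have hint := integrable_exp_neg_dotProduct hZm hZ (smul_nonneg hs hy)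
  simp only [smul_dotProduct, smul_eq_mul, ← neg_mul] at hint
  simpa [hmgf] using measure_le_le_exp_mul_mgf x (neg_nonpos.2 hs) hint

lemma exists_measure_dotProduct_le_le_exp_neg_rpow (hZm : Measurable Z)
    (hZ : ∀ᵐ ω ∂μ, 0 ≤ Z ω) {γ C T : ℝ} (hγ : γ < 1) (hC : 0 < C) (hT : 0 < T)
    (hdecay : ∀ t : ι → ℝ, 0 ≤ t → T ≤ ∑ j, t j →
      laplaceTransform μ Z t ≤ exp (-(C * (∑ j, t j) ^ γ)))
    {y : ι → ℝ} (hy : 0 ≤ y) (hy0 : y ≠ 0) :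
    ∃ κ > 0, ∃ x₀ > 0, ∀ x : ℝ, 0 < x → x ≤ x₀ →
      μ {ω | y ⬝ᵥ Z ω ≤ x} ≤ ENNReal.ofReal (exp (-(κ * x ^ (-(γ / (1 - γ)))))) := by
  obtain ⟨j, hj⟩ := Function.ne_iff.1 hy0
  have hY : 0 < ∑ j, y j :=
    Finset.sum_pos' (fun i _ => hy i) ⟨j, Finset.mem_univ j, (hy j).lt_of_ne' hj⟩
  have hdecay_y : ∀ s, T / ∑ j, y j ≤ s →
      laplaceTransform μ Z (s • y) ≤ exp (-(C * (∑ j, y j) ^ γ * s ^ γ)) := by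
    intro s hs
    have hs0 : 0 ≤ s := (div_pos hT hY).le.trans hs
    have hsum : ∑ j, (s • y) j = s * ∑ j, y j := by simp [Finset.mul_sum]
    have h := hdecay (s • y) (smul_nonneg hs0 hy) (by rw [hsum]; exact (div_le_iff₀ hY).1 hs)
    rwa [hsum, mul_rpow hs0 hY.le, mul_comm (s ^ γ), ← mul_assoc] at h
  obtain ⟨κ, hκ, x₀, hx₀, hopt⟩ :=
    exists_exp_mul_le_exp_neg_rpow hγ (mul_pos hC (rpow_pos_of_pos hY _)) (div_pos hT hY) hdecay_y
  refine ⟨κ, hκ, x₀, hx₀, fun x hx hxx => ?_⟩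
  obtain ⟨s, hs, hχ⟩ := hopt x hx hxx
  rw [← ofReal_measureReal]
  exact ENNReal.ofReal_le_ofReal
    ((measureReal_dotProduct_le_le hZm hZ hy ((div_pos hT hY).le.trans hs) x).trans hχ)

variable {N : Ω → ℕ} {A : ℕ → Ω → Matrix ι ι ℝ} {m : ℕ} {a : ℝ}

lemma const_mul_sum_le_vecMul {t : ι → ℝ} (ht : 0 ≤ t) {M : Matrix ι ι ℝ}
    (hM : ∀ i j, a ≤ M i j) (j : ι) : a * ∑ i, t i ≤ (t ᵥ* M) j := by
  rw [Finset.mul_sum]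
  exact Finset.sum_le_sum fun i _ => by
    rw [mul_comm]; exact mul_le_mul_of_nonneg_left (hM i j) (ht i)

lemma laplaceTransform_le_laplaceTransform_const_pow (hZm : Measurable Z)
    (hZ : ∀ᵐ ω ∂μ, 0 ≤ Z ω) (hA : ∀ k ω i j, 0 ≤ A k ω i j)
    (hfe : ∀ t : ι → ℝ, 0 ≤ t → laplaceTransform μ Z t =
      ∫ ω, ∏ k ∈ Finset.Icc 1 (N ω), laplaceTransform μ Z (t ᵥ* A k ω) ∂μ)
    (hNm : ∀ᵐ ω ∂μ, m ≤ N ω) (hAa : ∀ᵐ ω ∂μ, ∀ k, 1 ≤ k → k ≤ m → ∀ i j, a ≤ A k ω i j)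
    (ha : 0 ≤ a) {t : ι → ℝ} (ht : 0 ≤ t) :
    laplaceTransform μ Z t ≤ laplaceTransform μ Z (fun _ => a * ∑ j, t j) ^ m := by
  have hv : (0 : ι → ℝ) ≤ fun _ => a * ∑ j, t j :=
    fun _ => mul_nonneg ha (Finset.sum_nonneg fun j _ => ht j)
  rw [hfe t ht]
  refine (integral_mono_of_nonneg
    (ae_of_all _ fun _ => Finset.prod_nonneg fun _ _ => laplaceTransform_nonneg _)
    (integrable_const (laplaceTransform μ Z (fun _ => a * ∑ j, t j) ^ m)) ?_).trans_eq
    (by simp)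
  filter_upwards [hNm, hAa] with ω hNω hAω
  exact prod_Icc_le_pow_of_antitoneOn (fun _ _ => laplaceTransform_nonneg _)
    (fun _ => laplaceTransform_le_one hZ) (laplaceTransform_antitoneOn hZm hZ)
    (fun k j => Finset.sum_nonneg fun i _ => mul_nonneg (ht i) (hA k ω i j)) hv hNω
    fun k hk hkm => const_mul_sum_le_vecMul ht (hAω k hk hkm)

lemma exists_laplaceTransform_le_exp_neg_rpow [Nonempty ι] (hZm : Measurable Z)
    (hZpos : ∀ᵐ ω ∂μ, ∀ j, 0 < Z ω j) (hA : ∀ k ω i j, 0 ≤ A k ω i j)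
    (hfe : ∀ t : ι → ℝ, 0 ≤ t → laplaceTransform μ Z t =
      ∫ ω, ∏ k ∈ Finset.Icc 1 (N ω), laplaceTransform μ Z (t ᵥ* A k ω) ∂μ)
    (hNm : ∀ᵐ ω ∂μ, m ≤ N ω) (hAa : ∀ᵐ ω ∂μ, ∀ k, 1 ≤ k → k ≤ m → ∀ i j, a ≤ A k ω i j)
    (ha : 0 < a) (hap : a * Fintype.card ι < 1) {γ : ℝ} (hγ : 0 ≤ γ)
    (hbγ : (a * Fintype.card ι)⁻¹ ^ γ = m) :
    ∃ C > 0, ∃ T > 0, ∀ t : ι → ℝ, 0 ≤ t → T ≤ ∑ j, t j →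
      laplaceTransform μ Z t ≤ exp (-(C * (∑ j, t j) ^ γ)) := by
  have hZ : ∀ᵐ ω ∂μ, 0 ≤ Z ω := hZpos.mono fun ω hω j => (hω j).le
  set f : ℝ → ℝ := fun s => laplaceTransform μ Z fun _ => s
  set b := (a * Fintype.card ι)⁻¹
  have hb : 1 < b := one_lt_inv_iff₀.2 ⟨by positivity, hap⟩
  have hm : (0 : ℝ) < m := hbγ ▸ rpow_pos_of_pos (by linarith) γ
  have hkey : ∀ t : ι → ℝ, 0 ≤ t → laplaceTransform μ Z t ≤ f (a * ∑ j, t j) ^ m :=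
    fun _ => laplaceTransform_le_laplaceTransform_const_pow hZm hZ hA hfe hNm hAa ha.le
  have hstep : ∀ s, 1 ≤ s → f (b * s) ≤ f s ^ m := by
    intro s hs
    have hsum : a * ∑ _j : ι, b * s = s := by
      simp only [Finset.sum_const, Finset.card_univ, nsmul_eq_mul, b]
      field_simp
    simpa only [hsum] using hkey (fun _ => b * s) fun _ => by positivity
  obtain ⟨c, hc, hf1⟩ : ∃ c > 0, f 1 ≤ exp (-c) := by
    have h0 : 0 < f 1 := laplaceTransform_pos hZm hZ fun _ => zero_le_one
    have h1 : f 1 < 1 := laplaceTransform_lt_one hZm hZpos (fun _ => zero_le_one)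
      (Function.const_ne_zero.2 one_ne_zero)
    exact ⟨-log (f 1), neg_pos.2 (log_neg h0 h1), by rw [neg_neg, exp_log h0]⟩
  have hdiag : ∀ s, 1 ≤ s → f s ≤ exp (-(c / m * s ^ γ)) := fun s hs =>
    le_exp_neg_mul_rpow_of_le_pow hb hγ hbγ hc.le (fun _ _ => laplaceTransform_nonneg _)
      (fun s hs s' hs' hss' => laplaceTransform_antitoneOn hZm hZ
        (fun _ => zero_le_one.trans hs) (fun _ => zero_le_one.trans hs') fun _ => hss')
      hstep hf1 hs
  refine ⟨c / m * a ^ γ, by positivity, a⁻¹, by positivity, fun t ht hT => ?_⟩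
  have hS : 0 ≤ ∑ j, t j := Finset.sum_nonneg fun j _ => ht j
  calc laplaceTransform μ Z t ≤ f (a * ∑ j, t j) ^ m := hkey t ht
    _ ≤ f (a * ∑ j, t j) := pow_le_of_le_one (laplaceTransform_nonneg _)
        (laplaceTransform_le_one hZ fun _ => by positivity) (by exact_mod_cast hm.ne')
    _ ≤ exp (-(c / m * (a * ∑ j, t j) ^ γ)) := hdiag _ ((inv_le_iff_one_le_mul₀' ha).1 hT)
    _ = exp (-(c / m * a ^ γ * (∑ j, t j) ^ γ)) := by rw [mul_rpow ha.le hS, mul_assoc]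

end LaplaceTransform

theorem exponential_decay_upper_general
    {Ω : Type*} [MeasurableSpace Ω] (μ : Measure Ω) [IsProbabilityMeasure μ]
    {p : ℕ} (hp : 0 < p)
    (N : Ω → ℕ)
    (A : ℕ → Ω → Fin p → Fin p → ℝ) (hApos : ∀ k ω i j, 0 ≤ A k ω i j)
    (Z : Ω → Fin p → ℝ) (hZmeas : Measurable Z)
    (hZpos : ∀ᵐ ω ∂μ, ∀ j, 0 < Z ω j)
    (φ : (Fin p → ℝ) → ℝ)
    (hφ : ∀ t : Fin p → ℝ, φ t = ∫ ω, Real.exp (-(∑ j, t j * Z ω j)) ∂μ)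
    (hfe : ∀ t : Fin p → ℝ, (∀ j, 0 ≤ t j) →
      φ t = ∫ ω, ∏ k ∈ Finset.Icc 1 (N ω), φ (fun j => ∑ i, t i * A k ω i j) ∂μ)
    (m : ℕ) (hm : 2 ≤ m) (hNm : ∀ᵐ ω ∂μ, m ≤ N ω)
    (a : ℝ) (ha : 0 < a)
    (hAa : ∀ᵐ ω ∂μ, ∀ k, 1 ≤ k → k ≤ m → ∀ i j, a ≤ A k ω i j)
    (hapm : a * p * m < 1) (hap : a * p < 1) :
    (∃ C₁ > 0, ∃ T > 0, ∀ t : Fin p → ℝ, (∀ j, 0 ≤ t j) → T ≤ ∑ j, t j →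
      φ t ≤ Real.exp (-(C₁ * (∑ j, t j) ^ (-Real.log m / Real.log (a * p))))) ∧
    (∀ y : Fin p → ℝ, (∀ j, 0 ≤ y j) → y ≠ 0 →
      ∃ C > 0, ∃ x₀ > 0, ∀ x : ℝ, 0 < x → x ≤ x₀ →
        μ {ω | ∑ j, y j * Z ω j ≤ x} ≤ ENNReal.ofReal (Real.exp (-(C *
          x ^ (-((-Real.log m / Real.log (a * p)) /
            (1 - (-Real.log m / Real.log (a * p))))))))) := by
  obtain rfl : φ = laplaceTransform μ Z := funext hφ
  have : Nonempty (Fin p) := ⟨⟨0, hp⟩⟩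
  have hap0 : 0 < a * p := by positivity
  have hb : 1 < (a * p)⁻¹ := one_lt_inv_iff₀.2 ⟨hap0, hap⟩
  have hm1 : (1 : ℝ) ≤ m := by exact_mod_cast (by omega : 1 ≤ m)
  set γ := -log m / log (a * p) with hγ
  have hbγ : (a * p)⁻¹ ^ γ = m := by
    have hlog : -log (a * p) * γ = log m := by
      rw [hγ]
      field_simp [(log_neg hap0 hap).ne]
    rw [rpow_def_of_pos (by linarith), log_inv, hlog, exp_log (by linarith)]
  have hγ0 : 0 ≤ γ := div_nonneg_of_nonpos (neg_nonpos.2 (log_nonneg hm1)) (log_neg hap0 hap).le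
  have hγ1 : γ < 1 := by
    rw [← rpow_lt_rpow_left_iff hb, hbγ, rpow_one, ← mul_one (a * p)⁻¹, lt_inv_mul_iff₀ hap0]
    exact hapm
  obtain ⟨C, hC, T, hT, hdecay⟩ := exists_laplaceTransform_le_exp_neg_rpow hZmeas hZpos hApos
    hfe hNm hAa ha (by simpa using hap) hγ0 (by simpa using hbγ)
  exact ⟨⟨C, hC, T, hT, hdecay⟩, fun y hy hy0 => exists_measure_dotProduct_le_le_exp_neg_rpow
    hZmeas (hZpos.mono fun ω hω j => (hω j).le) hγ1 hC hT hdecay hy hy0⟩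

/-- **Theorem 2.4(a) (the exponential case, upper bound).** Suppose `N ≥ m̲ ≥ 2` a.s.,
`(A_k)_{ij} ≥ a̲ > 0` a.s. for all `i,j` and `1 ≤ k ≤ m̲`, and `a̲ p m̲ < 1`, `a̲ p < 1`
(so that `γ = -log m̲ / log(a̲ p) ∈ (0,1)`).  Then there is `C₁ > 0` with
`φ(t) ≤ exp(-C₁ ‖t‖^γ)` for all `t ∈ [0,∞)^p` with `‖t‖` large enough, and for every fixed
nonzero `y ∈ [0,∞)^p` there is `C_{1,y} > 0` with
`P(y·Z ≤ x) ≤ exp(-C_{1,y} x^{-γ/(1-γ)})` for all small `x > 0`. -/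
theorem exponential_decay_upper
    {Ω : Type*} [MeasurableSpace Ω] (μ : Measure Ω) [IsProbabilityMeasure μ]
    {p : ℕ} (hp : 0 < p)
    (N : Ω → ℕ) (hN : ∀ ω, 1 ≤ N ω) (hNmeas : Measurable N)
    (A : ℕ → Ω → Fin p → Fin p → ℝ) (hApos : ∀ k ω i j, 0 ≤ A k ω i j)
    (hAmeas : ∀ k, Measurable (A k))
    (Z : Ω → Fin p → ℝ) (hZmeas : Measurable Z)
    (hZpos : ∀ᵐ ω ∂μ, ∀ j, 0 < Z ω j)
    (φ : (Fin p → ℝ) → ℝ)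
    (hφ : ∀ t : Fin p → ℝ, φ t = ∫ ω, Real.exp (-(∑ j, t j * Z ω j)) ∂μ)
    (hfe : ∀ t : Fin p → ℝ, (∀ j, 0 ≤ t j) →
      φ t = ∫ ω, ∏ k ∈ Finset.Icc 1 (N ω), φ (fun j => ∑ i, t i * A k ω i j) ∂μ)
    (m : ℕ) (hm : 2 ≤ m) (hNm : ∀ᵐ ω ∂μ, m ≤ N ω)
    (a : ℝ) (ha : 0 < a)
    (hAa : ∀ᵐ ω ∂μ, ∀ k, 1 ≤ k → k ≤ m → ∀ i j, a ≤ A k ω i j)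
    (hapm : a * p * m < 1) (hap : a * p < 1) :
    (∃ C₁ > 0, ∃ T > 0, ∀ t : Fin p → ℝ, (∀ j, 0 ≤ t j) → T ≤ ∑ j, t j →
      φ t ≤ Real.exp (-(C₁ * (∑ j, t j) ^ (-Real.log m / Real.log (a * p))))) ∧
    (∀ y : Fin p → ℝ, (∀ j, 0 ≤ y j) → y ≠ 0 →
      ∃ C > 0, ∃ x₀ > 0, ∀ x : ℝ, 0 < x → x ≤ x₀ →
        μ {ω | ∑ j, y j * Z ω j ≤ x} ≤ ENNReal.ofReal (Real.exp (-(C *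
          x ^ (-((-Real.log m / Real.log (a * p)) /
            (1 - (-Real.log m / Real.log (a * p))))))))) :=
  exponential_decay_upper_general μ hp N A hApos Z hZmeas hZpos φ hφ hfe m hm hNm a ha hAa hapm hap
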